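/- (Lemma B.1.) Let R be a relation with sensitive attribute s, let D ⊆ V be the set of distinct sensitive values occurring in R, and let k := |D| with k ≥ 2 and |R| ≥ 2. If F is a family of subsets of R such that no two distinct members of F are representatively equivalent (i.e., for distinct R₁, R₂ ∈ F there is a value v with count_{R₁}(v) ≠ count_{R₂}(v)), then |F| ≤ ∏_{v ∈ D} (count_R(v) + 1), and moreover ∏_{v ∈ D} (count_R(v) + 1) ≤ ((|R| + k)/k)^k. -/

import Mathlib

open Finset

/-- The number of tuples in the relation `R` whose sensitive attribute `s` has value `v`. -/
def countVal {ι V : Type*} [DecidableEq V] (s : ι) (R : Finset (ι → V)) (v : V) : ℕ :=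
  (R.filter fun t => t s = v).card

/-- AM-GM; for `s = ∅` both sides are `1`. -/
theorem Real.prod_le_sum_div_card_pow {α : Type*} (s : Finset α) (f : α → ℝ)
    (hf : ∀ i ∈ s, 0 ≤ f i) : ∏ i ∈ s, f i ≤ ((∑ i ∈ s, f i) / #s) ^ #s := by
  rcases s.eq_empty_or_nonempty with rfl | hs
  · simp
  have hcard : (0 : ℝ) < #s := by exact_mod_cast hs.card_pos
  have hmean := Real.geom_mean_le_arith_mean s (fun _ => 1) f (fun _ _ => zero_le_one)
    (by simpa using hcard) hf
  simp only [Real.rpow_one, one_mul, sum_const, nsmul_eq_mul, mul_one] at hmean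
  calc ∏ i ∈ s, f i = ((∏ i ∈ s, f i) ^ ((#s : ℝ)⁻¹)) ^ #s :=
        (Real.rpow_inv_natCast_pow (prod_nonneg hf) hs.card_pos.ne').symm
    _ ≤ ((∑ i ∈ s, f i) / #s) ^ #s := by
      gcongr
      exact Real.rpow_nonneg (prod_nonneg hf) _

section countVal

variable {ι V : Type*} [DecidableEq V] (s : ι)

theorem countVal_mono {S R : Finset (ι → V)} (hS : S ⊆ R) (v : V) :
    countVal s S v ≤ countVal s R v :=
  card_le_card (filter_subset_filter _ hS)

theorem countVal_eq_zero_of_notMem_image {S R : Finset (ι → V)} (hS : S ⊆ R) {v : V}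
    (hv : v ∉ R.image fun t => t s) : countVal s S v = 0 := by
  rw [countVal, card_eq_zero, filter_eq_empty_iff]
  exact fun t ht hts => hv (mem_image.mpr ⟨t, hS ht, hts⟩)

theorem card_eq_sum_countVal (R : Finset (ι → V)) :
    #R = ∑ v ∈ R.image (fun t => t s), countVal s R v :=
  card_eq_sum_card_image _ R

/-- `F` injects into the box `∏_v [0, countVal s R v]` of count vectors. -/
theorem card_le_prod_countVal_succ {R : Finset (ι → V)} {F : Finset (Finset (ι → V))}
    (hF : ∀ S ∈ F, S ⊆ R) (hinj : Set.InjOn (countVal s) (F : Set (Finset (ι → V)))) :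
    #F ≤ ∏ v ∈ R.image (fun t => t s), (countVal s R v + 1) := by
  set D := R.image fun t => t s
  have hmaps : ∀ S ∈ F, (fun v (_ : v ∈ D) => countVal s S v) ∈
      D.pi fun v => range (countVal s R v + 1) := fun S hS =>
    mem_pi.mpr fun v _ => mem_range_succ_iff.mpr (countVal_mono s (hF S hS) v)
  have hinj' :
      Set.InjOn (fun S v (_ : v ∈ D) => countVal s S v) (F : Set (Finset (ι → V))) := by
    intro S₁ hS₁ S₂ hS₂ heq
    refine hinj hS₁ hS₂ (funext fun v => ?_)
    by_cases hv : v ∈ D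
    · exact congrFun (congrFun heq v) hv
    · rw [countVal_eq_zero_of_notMem_image s (hF S₁ hS₁) hv,
        countVal_eq_zero_of_notMem_image s (hF S₂ hS₂) hv]
  simpa [card_pi] using card_le_card_of_injOn _ hmaps hinj'

/-- The factors `countVal s R v + 1` sum to `|R| + k`, so AM-GM applies. -/
theorem prod_countVal_succ_le (R : Finset (ι → V)) :
    ((∏ v ∈ R.image (fun t => t s), (countVal s R v + 1) : ℕ) : ℚ) ≤
      ((#R + #(R.image fun t => t s) : ℚ) / #(R.image fun t => t s)) ^
        #(R.image fun t => t s) := by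
  set D := R.image fun t => t s
  have hsum : ∑ v ∈ D, ((countVal s R v : ℝ) + 1) = #R + #D := by
    rw [sum_add_distrib, card_eq_sum_countVal s R]
    simp [D]
  have hamgm := Real.prod_le_sum_div_card_pow D (fun v => (countVal s R v : ℝ) + 1)
    (fun _ _ => by positivity)
  rw [hsum] at hamgm
  rw [← Rat.cast_le (K := ℝ)]
  push_cast
  exact hamgm

end countVal

theorem candidate_family_size_bound_general {ι V : Type*} [DecidableEq V]
    (s : ι) (R : Finset (ι → V))
    (F : Finset (Finset (ι → V)))
    (hF : ∀ S ∈ F, S ⊆ R)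
    (hdist : ∀ S₁ ∈ F, ∀ S₂ ∈ F, S₁ ≠ S₂ → ∃ v : V, countVal s S₁ v ≠ countVal s S₂ v) :
    F.card ≤ ∏ v ∈ R.image (fun t => t s), (countVal s R v + 1) ∧
      ((∏ v ∈ R.image (fun t => t s), (countVal s R v + 1) : ℕ) : ℚ) ≤
        (((R.card : ℚ) + ((R.image fun t => t s).card : ℚ)) /
            ((R.image fun t => t s).card : ℚ)) ^ (R.image fun t => t s).card := by
  have hinj : Set.InjOn (countVal s) (F : Set (Finset (ι → V))) :=
    fun S₁ hS₁ S₂ hS₂ heq => by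
      by_contra hne
      obtain ⟨v, hv⟩ := hdist S₁ hS₁ S₂ hS₂ hne
      exact hv (congrFun heq v)
  exact ⟨card_le_prod_countVal_succ s hF hinj, prod_countVal_succ_le s R⟩

/-- Lemma B.1: if `D = R.image (· s)` is the set of distinct sensitive values occurring
in `R`, `k = |D| ≥ 2`, `|R| ≥ 2`, and `F` is a family of subsets of `R` no two distinct
members of which are representatively equivalent, then
`|F| ≤ ∏_{v ∈ D} (count_R(v) + 1)`, and moreover
`∏_{v ∈ D} (count_R(v) + 1) ≤ ((|R| + k)/k)^k`. -/
theorem candidate_family_size_bound {ι V : Type*} [DecidableEq V]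
    (s : ι) (R : Finset (ι → V))
    (hR : 2 ≤ R.card) (hk : 2 ≤ (R.image fun t => t s).card)
    (F : Finset (Finset (ι → V)))
    (hF : ∀ S ∈ F, S ⊆ R)
    (hdist : ∀ S₁ ∈ F, ∀ S₂ ∈ F, S₁ ≠ S₂ → ∃ v : V, countVal s S₁ v ≠ countVal s S₂ v) :
    F.card ≤ ∏ v ∈ R.image (fun t => t s), (countVal s R v + 1) ∧
      ((∏ v ∈ R.image (fun t => t s), (countVal s R v + 1) : ℕ) : ℚ) ≤
        (((R.card : ℚ) + ((R.image fun t => t s).card : ℚ)) /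
            ((R.image fun t => t s).card : ℚ)) ^ (R.image fun t => t s).card :=
  candidate_family_size_bound_general s R F hF hdist
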